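/- arXiv:1709.01747 — 5 statements merged into one kernel-verified Lean document; each statement's English description precedes it below -/
import Mathlib

section
/- Let G be a locally compact Hausdorff abelian topological group with Haar measure, let L be a countably infinite lattice in G (a discrete closed subgroup with compact quotient G/L), and let ψ ∈ L²(G) be nonzero. Then the system of translates F_ψ = (T_k ψ)_{k∈L} is democratic in L²(G) if and only if there exist constants 0 < c_ψ ≤ C_ψ < ∞ such that for every nonempty finite set Γ ⊂ L one has c_ψ·card(Γ) ≤ ‖∑_{k∈Γ} T_k ψ‖²_{L²(G)} ≤ C_ψ·card(Γ). -/
open MeasureTheory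

noncomputable section

/-- A family of (nonzero) vectors in a normed space is *democratic* if there is a constant
`D ∈ (0,∞)` such that for any two finite subsets of the family with the same cardinality the
norms of the sums of the normalized vectors are comparable with constant `D`. -/
def Democratic {X : Type*} [NormedAddCommGroup X] [NormedSpace ℝ X] {ι : Type*} (f : ι → X) :
    Prop :=
  ∃ D : ℝ, 0 < D ∧ ∀ Γ₁ Γ₂ : Finset ι, Γ₁.card = Γ₂.card →
    ‖∑ k ∈ Γ₁, ‖f k‖⁻¹ • f k‖ ≤ D * ‖∑ k ∈ Γ₂, ‖f k‖⁻¹ • f k‖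

/-- The translate `T_y f`, `(T_y f)(x) = f (x - y)`, of an `L²` function. -/
def translateLp {G : Type*} [MeasurableSpace G] [AddCommGroup G] [MeasurableAdd G]
    (μ : Measure G) [μ.IsAddRightInvariant] (y : G) (f : Lp ℂ 2 μ) : Lp ℂ 2 μ :=
  Lp.compMeasurePreserving (fun x => x - y) (measurePreserving_sub_right μ y) f

/-! Every translate of `ψ` has norm `‖ψ‖`, so democracy of the translates says that the norms
`‖∑_{k ∈ Γ} T_k ψ‖` are comparable, with a uniform constant, over all `Γ` of a given cardinality.
Since `L` is countable and `G ⧸ L` is compact, `G` is σ-compact; hence `ψ` is an `L²`-limit of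
functions vanishing off compact sets, and the correlations `⟪T_a ψ, ψ⟫` tend to `0` as `a` leaves
every compact set. A discrete subgroup leaves every compact set cofinitely, so for each `n` there
are `n` lattice points whose translates are almost orthogonal, and their sum has squared norm close
to `n ‖ψ‖²`. Comparing an arbitrary `Γ` with such a reference set gives the two-sided bound;
conversely the bounds make the translates democratic with constant `√(C / c)`. -/

open Filter Topology Finset
open scoped InnerProductSpace Pointwise ENNReal

section FiniteSums

variable {ι X : Type*}

theorem democratic_iff_of_norm_eq [NormedAddCommGroup X] [NormedSpace ℝ X] {v : ι → X} {r : ℝ}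
    (hr : 0 < r) (hv : ∀ i, ‖v i‖ = r) :
    Democratic v ↔ ∃ D : ℝ, 0 < D ∧ ∀ Γ₁ Γ₂ : Finset ι, #Γ₁ = #Γ₂ →
      ‖∑ i ∈ Γ₁, v i‖ ≤ D * ‖∑ i ∈ Γ₂, v i‖ := by
  have hsum (Γ : Finset ι) : ‖∑ i ∈ Γ, ‖v i‖⁻¹ • v i‖ = r⁻¹ * ‖∑ i ∈ Γ, v i‖ := by
    simp only [hv, ← smul_sum, norm_smul, norm_inv, Real.norm_of_nonneg hr.le]
  simp only [Democratic, hsum, mul_left_comm _ r⁻¹, mul_le_mul_iff_right₀ (inv_pos.2 hr)]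

theorem norm_sum_le_sqrt_div_mul_norm_sum [SeminormedAddCommGroup X] {v : ι → X} {c C : ℝ}
    (hc : 0 < c) (hbounds : ∀ Γ : Finset ι, Γ.Nonempty →
      c * #Γ ≤ ‖∑ i ∈ Γ, v i‖ ^ 2 ∧ ‖∑ i ∈ Γ, v i‖ ^ 2 ≤ C * #Γ)
    {Γ₁ Γ₂ : Finset ι} (hcard : #Γ₁ = #Γ₂) :
    ‖∑ i ∈ Γ₁, v i‖ ≤ √(C / c) * ‖∑ i ∈ Γ₂, v i‖ := by
  rcases Γ₁.eq_empty_or_nonempty with rfl | hΓ₁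
  · simp only [sum_empty, norm_zero]
    positivity
  have hΓ₂ : Γ₂.Nonempty := by rwa [← card_pos, ← hcard, card_pos]
  obtain ⟨hlow₁, hup₁⟩ := hbounds Γ₁ hΓ₁
  have hcC : c ≤ C := le_of_mul_le_mul_right (hlow₁.trans hup₁) (by simpa using hΓ₁)
  have hCc : 0 ≤ C / c := div_nonneg (hc.le.trans hcC) hc.le
  have hsq : ‖∑ i ∈ Γ₁, v i‖ ^ 2 ≤ C / c * ‖∑ i ∈ Γ₂, v i‖ ^ 2 := calc
    _ ≤ C * #Γ₁ := hup₁
    _ = C / c * (c * #Γ₂) := by rw [hcard]; field_simp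
    _ ≤ _ := mul_le_mul_of_nonneg_left (hbounds Γ₂ hΓ₂).1 hCc
  calc ‖∑ i ∈ Γ₁, v i‖ = √(‖∑ i ∈ Γ₁, v i‖ ^ 2) := (Real.sqrt_sq (norm_nonneg _)).symm
    _ ≤ √(C / c * ‖∑ i ∈ Γ₂, v i‖ ^ 2) := Real.sqrt_le_sqrt hsq
    _ = √(C / c) * ‖∑ i ∈ Γ₂, v i‖ := by rw [Real.sqrt_mul hCc, Real.sqrt_sq (norm_nonneg _)]

theorem norm_sum_sq_bounds_of_forall_card_eq [SeminormedAddCommGroup X] {v : ι → X}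
    {D a b : ℝ} (hD : 0 < D)
    (hdem : ∀ Γ₁ Γ₂ : Finset ι, #Γ₁ = #Γ₂ → ‖∑ i ∈ Γ₁, v i‖ ≤ D * ‖∑ i ∈ Γ₂, v i‖)
    (href : ∀ n : ℕ, ∃ Γ : Finset ι, #Γ = n ∧
      a * n ≤ ‖∑ i ∈ Γ, v i‖ ^ 2 ∧ ‖∑ i ∈ Γ, v i‖ ^ 2 ≤ b * n)
    (Γ : Finset ι) :
    a / D ^ 2 * #Γ ≤ ‖∑ i ∈ Γ, v i‖ ^ 2 ∧ ‖∑ i ∈ Γ, v i‖ ^ 2 ≤ D ^ 2 * b * #Γ := by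
  obtain ⟨Γ', hcard, hlow, hup⟩ := href #Γ
  have hsq {Γ₁ Γ₂ : Finset ι} (h : #Γ₁ = #Γ₂) :
      ‖∑ i ∈ Γ₁, v i‖ ^ 2 ≤ D ^ 2 * ‖∑ i ∈ Γ₂, v i‖ ^ 2 := by
    rw [← mul_pow]
    exact pow_le_pow_left₀ (norm_nonneg _) (hdem _ _ h) 2
  constructor
  · rw [div_mul_eq_mul_div, div_le_iff₀ (by positivity), mul_comm _ (D ^ 2)]
    exact hlow.trans (hsq hcard)
  · rw [mul_assoc]
    exact (hsq hcard.symm).trans (by gcongr)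

theorem exists_finset_card_eq_pairwise [Infinite ι] {r : ι → ι → Prop}
    (hr : ∀ i, ∀ᶠ j in cofinite, r i j ∧ r j i) (n : ℕ) :
    ∃ s : Finset ι, #s = n ∧ (s : Set ι).Pairwise r := by
  classical
  induction n with
  | zero => exact ⟨∅, card_empty, by simp⟩
  | succ n ih =>
    obtain ⟨s, hcard, hs⟩ := ih
    obtain ⟨j, hjr, hjs⟩ :=
      (((eventually_all_finset s).2 fun i _ => hr i).and s.eventually_cofinite_notMem).exists
    refine ⟨insert j s, by rw [card_insert_of_notMem hjs, hcard], ?_⟩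
    rw [coe_insert, Set.pairwise_insert]
    exact ⟨hs, fun i hi _ => (hjr i hi).symm⟩

variable {𝕜 E : Type*} [RCLike 𝕜] [NormedAddCommGroup E] [InnerProductSpace 𝕜 E]

theorem LinearIsometry.norm_inner_map_self_sub_inner_map_self_le (U : E →ₗᵢ[𝕜] E) (x y : E) :
    ‖⟪U x, x⟫_𝕜 - ⟪U y, y⟫_𝕜‖ ≤ ‖x - y‖ * (‖x‖ + ‖y‖) := by
  have hsplit : ⟪U x, x⟫_𝕜 - ⟪U y, y⟫_𝕜 = ⟪U (x - y), x⟫_𝕜 + ⟪U y, x - y⟫_𝕜 := by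
    rw [map_sub, inner_sub_left, inner_sub_right]
    ring
  calc _ ≤ ‖U (x - y)‖ * ‖x‖ + ‖U y‖ * ‖x - y‖ := by
        rw [hsplit]
        exact (norm_add_le _ _).trans (add_le_add (norm_inner_le_norm _ _) (norm_inner_le_norm _ _))
    _ = ‖x - y‖ * (‖x‖ + ‖y‖) := by simp only [LinearIsometry.norm_map]; ring

theorem abs_norm_sum_sq_sub_card_mul_sq_le (s : Finset ι) {v : ι → E} {r ε : ℝ} (hε : 0 ≤ ε)
    (hv : ∀ i ∈ s, ‖v i‖ = r) (hpair : (s : Set ι).Pairwise fun i j => ‖⟪v i, v j⟫_𝕜‖ ≤ ε) :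
    |‖∑ i ∈ s, v i‖ ^ 2 - #s * r ^ 2| ≤ #s ^ 2 * ε := by
  classical
  have hrow : ∀ i ∈ s, RCLike.re ⟪v i, ∑ j ∈ s, v j⟫_𝕜 =
      r ^ 2 + ∑ j ∈ s.erase i, RCLike.re ⟪v i, v j⟫_𝕜 := by
    intro i hi
    rw [inner_sum, map_sum, ← add_sum_erase s _ hi, ← norm_sq_eq_re_inner, hv i hi]
  rw [@norm_sq_eq_re_inner 𝕜, sum_inner, map_sum, sum_congr rfl hrow, sum_add_distrib, sum_const,
    nsmul_eq_mul, add_sub_cancel_left]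
  calc _ ≤ ∑ i ∈ s, ∑ j ∈ s.erase i, ε := by
        refine (abs_sum_le_sum_abs _ _).trans (sum_le_sum fun i hi =>
          (abs_sum_le_sum_abs _ _).trans (sum_le_sum fun j hj => ?_))
        exact (RCLike.abs_re_le_norm _).trans
          (hpair hi (mem_of_mem_erase hj) (ne_of_mem_erase hj).symm)
    _ ≤ ∑ i ∈ s, ∑ j ∈ s, ε :=
        sum_le_sum fun i _ => sum_le_sum_of_subset_of_nonneg (erase_subset i s) fun _ _ _ => hε
    _ = #s ^ 2 * ε := by simp [sq, mul_assoc]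

theorem exists_finset_card_eq_norm_sum_sq_near [Infinite ι] {v : ι → E} {r : ℝ}
    (hv : ∀ i, ‖v i‖ = r) (hdecay : ∀ i, Tendsto (fun j => ⟪v i, v j⟫_𝕜) cofinite (𝓝 0))
    {δ : ℝ} (hδ : 0 < δ) (n : ℕ) :
    ∃ s : Finset ι, #s = n ∧
      (r ^ 2 - δ) * n ≤ ‖∑ i ∈ s, v i‖ ^ 2 ∧ ‖∑ i ∈ s, v i‖ ^ 2 ≤ (r ^ 2 + δ) * n := by
  obtain ⟨ε, hε, hεδ⟩ := exists_pos_mul_lt hδ n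
  have hsmall (i : ι) : ∀ᶠ j in cofinite, ‖⟪v i, v j⟫_𝕜‖ ≤ ε ∧ ‖⟪v j, v i⟫_𝕜‖ ≤ ε :=
    ((hdecay i).norm.eventually (eventually_le_nhds (by rwa [norm_zero]))).mono
      fun j hj => ⟨hj, by rwa [norm_inner_symm]⟩
  obtain ⟨s, hs, hpair⟩ := exists_finset_card_eq_pairwise hsmall n
  have hnear := abs_norm_sum_sq_sub_card_mul_sq_le s hε.le (fun i _ => hv i) hpair
  rw [hs] at hnear
  have herr : (n : ℝ) ^ 2 * ε ≤ δ * n := by nlinarith [(n.cast_nonneg : (0 : ℝ) ≤ n)]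
  refine ⟨s, hs, ?_, ?_⟩ <;> linarith [abs_le.1 hnear]

end FiniteSums

namespace MeasureTheory

variable {α E : Type*} [MeasurableSpace α] [TopologicalSpace α] [SigmaCompactSpace α]
  [T2Space α] [OpensMeasurableSpace α] {μ : Measure α}

theorem exists_isCompact_setLIntegral_compl_lt {f : α → ℝ≥0∞} (hf : ∫⁻ a, f a ∂μ ≠ ∞)
    {ε : ℝ≥0∞} (hε : ε ≠ 0) : ∃ K : Set α, IsCompact K ∧ ∫⁻ a in Kᶜ, f a ∂μ < ε := by
  have hmeas (n : ℕ) : MeasurableSet (compactCovering α n)ᶜ :=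
    (isCompact_compactCovering α n).measurableSet.compl
  have htail := tendsto_measure_iInter_atTop (μ := μ.withDensity f)
    (fun n => (hmeas n).nullMeasurableSet)
    (fun _ _ hmn => Set.compl_subset_compl.2 (compactCovering_subset α hmn))
    ⟨0, by
      rw [withDensity_apply _ (hmeas 0)]
      exact ne_top_of_le_ne_top hf (setLIntegral_le_lintegral _ _)⟩
  rw [← Set.compl_iUnion, iUnion_compactCovering, Set.compl_univ, measure_empty] at htail
  obtain ⟨n, hn⟩ := (htail.eventually (gt_mem_nhds (pos_iff_ne_zero.2 hε))).exists
  rw [Function.comp_apply, withDensity_apply _ (hmeas n)] at hn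
  exact ⟨_, isCompact_compactCovering α n, hn⟩

variable [NormedAddCommGroup E] {p : ℝ≥0∞}

theorem MemLp.exists_isCompact_eLpNorm_indicator_compl_lt (hp : p ≠ ∞) {f : α → E}
    (hf : MemLp f p μ) {ε : ℝ≥0∞} (hε : ε ≠ 0) :
    ∃ K : Set α, IsCompact K ∧ eLpNorm (Kᶜ.indicator f) p μ < ε := by
  rcases eq_or_ne p 0 with rfl | hp₀
  · exact ⟨∅, isCompact_empty, by simpa using pos_iff_ne_zero.2 hε⟩
  obtain ⟨K, hK, htail⟩ := exists_isCompact_setLIntegral_compl_lt (μ := μ)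
    ((eLpNorm_lt_top_iff_lintegral_rpow_enorm_lt_top hp₀ hp).1 hf.2).ne
    (ε := ε ^ p.toReal) (by simp [*])
  refine ⟨K, hK, ?_⟩
  rwa [eLpNorm_indicator_eq_eLpNorm_restrict hK.measurableSet.compl,
    eLpNorm_eq_lintegral_rpow_enorm_toReal hp₀ hp, one_div, ENNReal.rpow_inv_lt_iff]
  simp [ENNReal.toReal_pos, *]

theorem Lp.exists_isCompact_norm_sub_lt [Fact (1 ≤ p)] (hp : p ≠ ∞) (f : Lp E p μ) {ε : ℝ}
    (hε : 0 < ε) :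
    ∃ K : Set α, IsCompact K ∧ ∃ g : Lp E p μ,
      (∀ᵐ x ∂μ, x ∉ K → g x = 0) ∧ ‖f - g‖ < ε ∧ ‖g‖ ≤ ‖f‖ := by
  obtain ⟨K, hK, htail⟩ := (Lp.memLp f).exists_isCompact_eLpNorm_indicator_compl_lt hp
    (ENNReal.ofReal_pos.2 hε).ne'
  let g := ((Lp.memLp f).indicator hK.measurableSet).toLp (K.indicator f)
  have hg : g =ᵐ[μ] K.indicator f := MemLp.coeFn_toLp _
  refine ⟨K, hK, g, ?_, ?_, ?_⟩
  · filter_upwards [hg] with x hx hxK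
    rw [hx, Set.indicator_of_notMem hxK]
  · have hfg : ⇑(f - g) =ᵐ[μ] Kᶜ.indicator f := by
      filter_upwards [Lp.coeFn_sub f g, hg] with x h₁ h₂
      rw [h₁, Pi.sub_apply, h₂, Set.indicator_compl, Pi.sub_apply]
    rw [Lp.norm_def, eLpNorm_congr_ae hfg]
    exact ENNReal.toReal_lt_of_lt_ofReal htail
  · rw [Lp.norm_toLp, Lp.norm_def]
    exact ENNReal.toReal_mono (Lp.eLpNorm_ne_top f) (eLpNorm_indicator_le _)

end MeasureTheory

theorem IsOpenMap.exists_isCompact_image_eq_univ {X Y : Type*} [TopologicalSpace X]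
    [TopologicalSpace Y] [WeaklyLocallyCompactSpace X] [CompactSpace Y] {q : X → Y}
    (hq : IsOpenMap q) (hsurj : Function.Surjective q) :
    ∃ K : Set X, IsCompact K ∧ q '' K = Set.univ := by
  choose V hVc hV using fun x : X => exists_compact_mem_nhds x
  obtain ⟨t, ht⟩ := isCompact_univ.elim_finite_subcover (fun x => q '' interior (V x))
    (fun x => hq _ isOpen_interior) fun y _ => by
      obtain ⟨x, rfl⟩ := hsurj y
      exact Set.mem_iUnion.2 ⟨x, Set.mem_image_of_mem q (mem_interior_iff_mem_nhds.2 (hV x))⟩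
  refine ⟨⋃ x ∈ t, V x, t.isCompact_biUnion fun x _ => hVc x,
    Set.eq_univ_of_univ_subset (ht.trans ?_)⟩
  rw [Set.image_iUnion₂]
  exact Set.iUnion₂_mono fun x _ => Set.image_mono interior_subset

theorem AddSubgroup.sigmaCompactSpace_of_countable_of_compactSpace_quotient {G : Type*}
    [AddGroup G] [TopologicalSpace G] [IsTopologicalAddGroup G] [WeaklyLocallyCompactSpace G]
    (L : AddSubgroup G) [Countable L] [CompactSpace (G ⧸ L)] : SigmaCompactSpace G := by
  obtain ⟨K, hK, hKL⟩ :=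
    QuotientAddGroup.isOpenMap_coe.exists_isCompact_image_eq_univ
      (QuotientAddGroup.mk_surjective (s := L))
  refine SigmaCompactSpace.of_countable (Set.range fun l : L => (· + (l : G)) '' K)
    (Set.countable_range _) (by rintro _ ⟨l, rfl⟩; exact hK.image (continuous_add_const _)) ?_
  rw [Set.sUnion_range]
  refine Set.eq_univ_of_forall fun g => ?_
  obtain ⟨k, hk, hkg⟩ : (g : G ⧸ L) ∈ (↑) '' K := hKL ▸ Set.mem_univ _
  exact Set.mem_iUnion.2 ⟨⟨-k + g, QuotientAddGroup.eq.1 hkg⟩, k, hk, add_neg_cancel_left k g⟩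

section Translates

variable {G : Type*} [MeasurableSpace G] [AddCommGroup G] [MeasurableAdd G]
  (μ : Measure G) [μ.IsAddRightInvariant]

def translateLpₗᵢ (y : G) : Lp ℂ 2 μ →ₗᵢ[ℂ] Lp ℂ 2 μ :=
  Lp.compMeasurePreservingₗᵢ ℂ (fun x => x - y) (measurePreserving_sub_right μ y)

theorem coeFn_translateLp (y : G) (f : Lp ℂ 2 μ) :
    translateLp μ y f =ᵐ[μ] fun x => f (x - y) :=
  Lp.coeFn_compMeasurePreserving f _

theorem norm_translateLp (y : G) (f : Lp ℂ 2 μ) : ‖translateLp μ y f‖ = ‖f‖ :=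
  (translateLpₗᵢ μ y).norm_map f

theorem translateLp_translateLp (a b : G) (f : Lp ℂ 2 μ) :
    translateLp μ a (translateLp μ b f) = translateLp μ (a + b) f := by
  refine Lp.ext ?_
  filter_upwards [coeFn_translateLp μ a (translateLp μ b f), coeFn_translateLp μ (a + b) f,
    (measurePreserving_sub_right μ a).quasiMeasurePreserving.ae (coeFn_translateLp μ b f)]
    with x h₁ h₂ h₃
  rw [h₁, h₂, h₃, sub_sub]

theorem inner_translateLp_translateLp (a b : G) (f g : Lp ℂ 2 μ) :
    ⟪translateLp μ a f, translateLp μ b g⟫_ℂ = ⟪translateLp μ (a - b) f, g⟫_ℂ := by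
  have hsplit : translateLp μ a f = translateLp μ b (translateLp μ (a - b) f) := by
    rw [translateLp_translateLp, add_sub_cancel]
  rw [hsplit]
  exact (translateLpₗᵢ μ b).inner_map_map _ _

theorem inner_translateLp_eq_zero_of_notMem_sub {g : Lp ℂ 2 μ} {K : Set G}
    (hg : ∀ᵐ x ∂μ, x ∉ K → g x = 0) {a : G} (ha : a ∉ K - K) :
    ⟪translateLp μ a g, g⟫_ℂ = 0 := by
  have hshift : ∀ᵐ x ∂μ, x - a ∉ K → g (x - a) = 0 :=
    (measurePreserving_sub_right μ a).quasiMeasurePreserving.ae hg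
  rw [L2.inner_def]
  refine integral_eq_zero_of_ae ?_
  filter_upwards [coeFn_translateLp μ a g, hg, hshift] with x hx hgx hgxa
  by_cases hxK : x ∈ K
  · have hxaK : x - a ∉ K := fun h => ha ⟨x, hxK, x - a, h, sub_sub_cancel x a⟩
    rw [hx, hgxa hxaK, inner_zero_left, Pi.zero_apply]
  · rw [hgx hxK, inner_zero_right, Pi.zero_apply]

variable [TopologicalSpace G] [IsTopologicalAddGroup G] [T2Space G] [SigmaCompactSpace G]
  [BorelSpace G]

theorem tendsto_inner_translateLp_cocompact (ψ : Lp ℂ 2 μ) :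
    Tendsto (fun a => ⟪translateLp μ a ψ, ψ⟫_ℂ) (cocompact G) (𝓝 0) := by
  rw [Metric.tendsto_nhds]
  intro ε hε
  obtain ⟨δ, hδ, hδε⟩ := exists_pos_mul_lt hε (2 * ‖ψ‖)
  obtain ⟨K, hK, g, hgK, hψg, hg⟩ := Lp.exists_isCompact_norm_sub_lt ENNReal.ofNat_ne_top ψ hδ
  have hKK : IsCompact (K - K) := by
    rw [sub_eq_add_neg]
    exact hK.add hK.neg
  filter_upwards [hKK.compl_mem_cocompact] with a ha
  rw [dist_zero_right, ← sub_zero ⟪_, _⟫_ℂ, ← inner_translateLp_eq_zero_of_notMem_sub μ hgK ha]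
  calc _ ≤ ‖ψ - g‖ * (‖ψ‖ + ‖g‖) :=
        (translateLpₗᵢ μ a).norm_inner_map_self_sub_inner_map_self_le ψ g
    _ ≤ δ * (2 * ‖ψ‖) := by gcongr; linarith
    _ < ε := by linarith

theorem tendsto_inner_translateLp_translateLp_cofinite {L : AddSubgroup G}
    (hL : IsDiscrete (L : Set G)) (ψ : Lp ℂ 2 μ) (k : L) :
    Tendsto (fun l : L => ⟪translateLp μ k ψ, translateLp μ l ψ⟫_ℂ) cofinite (𝓝 0) := by
  simp_rw [inner_translateLp_translateLp]
  have hsub : Tendsto (fun l : L => ((k - l : L) : G)) cofinite (cocompact G) :=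
    (L.tendsto_coe_cofinite_of_discrete hL).comp (sub_right_injective (b := k)).tendsto_cofinite
  simpa [Function.comp_def] using (tendsto_inner_translateLp_cocompact μ ψ).comp hsub

end Translates

theorem democratic_iff_norm_sq_sum_translates_comparable_card_general
    {G : Type*} [AddCommGroup G] [TopologicalSpace G] [IsTopologicalAddGroup G]
    [T2Space G] [LocallyCompactSpace G] [MeasurableSpace G] [BorelSpace G]
    (μ : Measure G) [μ.IsAddHaarMeasure]
    (L : AddSubgroup G) (hLdisc : DiscreteTopology L)
    (hLcount : Countable L) (hLinf : Infinite L) (hLcocompact : CompactSpace (G ⧸ L))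
    (ψ : Lp ℂ 2 μ) (hψ : ψ ≠ 0) :
    Democratic (fun k : L => translateLp μ (k : G) ψ) ↔
      ∃ c C : ℝ, 0 < c ∧ 0 < C ∧ c ≤ C ∧ ∀ Γ : Finset L, Γ.Nonempty →
        c * Γ.card ≤ ‖∑ k ∈ Γ, translateLp μ (k : G) ψ‖ ^ 2 ∧
        ‖∑ k ∈ Γ, translateLp μ (k : G) ψ‖ ^ 2 ≤ C * Γ.card := by
  have := L.sigmaCompactSpace_of_countable_of_compactSpace_quotient
  have hψ₀ : 0 < ‖ψ‖ := norm_pos_iff.2 hψ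
  have hnorm (k : L) : ‖translateLp μ k ψ‖ = ‖ψ‖ := norm_translateLp μ _ ψ
  rw [democratic_iff_of_norm_eq hψ₀ hnorm]
  constructor
  · rintro ⟨D, hD, hdem⟩
    have hdecay := tendsto_inner_translateLp_translateLp_cofinite μ
      (isDiscrete_iff_discreteTopology.2 hLdisc) ψ
    have hbounds := norm_sum_sq_bounds_of_forall_card_eq hD hdem
      (exists_finset_card_eq_norm_sum_sq_near hnorm hdecay (half_pos (pow_pos hψ₀ 2)))
    obtain ⟨hlow, hup⟩ := hbounds {0}
    refine ⟨_, _, by rw [sub_half]; positivity, by positivity, ?_, fun Γ _ => hbounds Γ⟩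
    simpa using hlow.trans hup
  · rintro ⟨c, C, hc, hC, -, hbounds⟩
    exact ⟨_, Real.sqrt_pos.2 (div_pos hC hc),
      fun _ _ => norm_sum_le_sqrt_div_mul_norm_sum hc hbounds⟩

/-- The system of translates `F_ψ = (T_k ψ)_{k∈L}` of a nonzero `ψ ∈ L²(G)` along a countably
infinite lattice `L` in a locally compact Hausdorff abelian group `G` is democratic if and only
if there are constants `0 < c ≤ C < ∞` with
`c · card Γ ≤ ‖∑_{k∈Γ} T_k ψ‖² ≤ C · card Γ` for every nonempty finite `Γ ⊆ L`. -/
theorem democratic_iff_norm_sq_sum_translates_comparable_card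
    {G : Type*} [AddCommGroup G] [TopologicalSpace G] [IsTopologicalAddGroup G]
    [T2Space G] [LocallyCompactSpace G] [MeasurableSpace G] [BorelSpace G]
    (μ : Measure G) [μ.IsAddHaarMeasure]
    (L : AddSubgroup G) (hLdisc : DiscreteTopology L) (hLclosed : IsClosed (L : Set G))
    (hLcount : Countable L) (hLinf : Infinite L) (hLcocompact : CompactSpace (G ⧸ L))
    (ψ : Lp ℂ 2 μ) (hψ : ψ ≠ 0) :
    Democratic (fun k : L => translateLp μ (k : G) ψ) ↔
      ∃ c C : ℝ, 0 < c ∧ 0 < C ∧ c ≤ C ∧ ∀ Γ : Finset L, Γ.Nonempty →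
        c * Γ.card ≤ ‖∑ k ∈ Γ, translateLp μ (k : G) ψ‖ ^ 2 ∧
        ‖∑ k ∈ Γ, translateLp μ (k : G) ψ‖ ^ 2 ≤ C * Γ.card :=
  democratic_iff_norm_sq_sum_translates_comparable_card_general μ L hLdisc hLcount hLinf hLcocompact
    ψ hψ
end
end

section
/- For any finite system of vectors (f_k)_{k∈Γ} in a complex Banach space (X,‖·‖) and any coefficients (α_k)_{k∈Γ} with |α_k| ≤ 1 for each k ∈ Γ, one has ‖∑_{k∈Γ} α_k f_k‖ ≤ π · max_{Γ'⊆Γ} ‖∑_{k∈Γ'} f_k‖, where the maximum is taken over all subsets Γ' of Γ. -/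
/-!
By Hahn–Banach it suffices to bound `|g (∑ α_k f_k)|` for a functional `g` of norm at most one,
and since `|α_k| ≤ 1` this is at most `∑ |z_k|` with `z_k = g f_k`. For each angle `t`, the
positive parts of `Re (e^{it} z_k)` add up to `Re (e^{it} ∑_{k ∈ Γ_t} z_k) ≤ M`, where `Γ_t` is
the set of indices where they are positive. Averaging over `t ∈ [0, 2π]` and using
`∫ (Re (e^{it} z))⁺ dt = 2 |z|` gives `2 ∑ |z_k| ≤ 2π M`.
-/

open Finset Real

theorem integral_max_zero_cos_eq_two (a : ℝ) :
    ∫ t in a..a + 2 * π, max 0 (cos t) = 2 := by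
  have hper : Function.Periodic (fun t => max 0 (cos t)) (2 * π) := fun t => by
    simp only [cos_add_two_pi]
  rw [hper.intervalIntegral_add_eq a (-(π / 2)),
    ← intervalIntegral.integral_add_adjacent_intervals (b := π / 2)
      (by apply Continuous.intervalIntegrable; fun_prop)
      (by apply Continuous.intervalIntegrable; fun_prop)]
  have hpos : ∫ t in -(π / 2)..(π / 2), max 0 (cos t) = 2 := by
    rw [intervalIntegral.integral_congr (g := cos) fun t ht => ?_, integral_cos]
    · rw [sin_neg, sin_pi_div_two]
      norm_num
    rw [Set.uIcc_of_le (by linarith [pi_pos])] at ht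
    exact max_eq_right (cos_nonneg_of_mem_Icc ht)
  have hneg : ∫ t in (π / 2)..(-(π / 2) + 2 * π), max 0 (cos t) = 0 := by
    rw [intervalIntegral.integral_congr (g := fun _ => 0) fun t ht => ?_,
      intervalIntegral.integral_zero]
    rw [Set.uIcc_of_le (by linarith [pi_pos])] at ht
    exact max_eq_left (cos_nonpos_of_pi_div_two_le_of_le ht.1 (by linarith [ht.2]))
  rw [hpos, hneg, add_zero]

namespace Complex

theorem re_exp_mul_I_mul (t : ℝ) (z : ℂ) :
    (exp (t * I) * z).re = ‖z‖ * Real.cos (t + z.arg) := by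
  conv_lhs => rw [← norm_mul_exp_arg_mul_I z]
  rw [mul_left_comm, ← exp_add, ← add_mul, ← ofReal_add, re_ofReal_mul, exp_ofReal_mul_I_re]

theorem integral_max_zero_re_exp_mul_I_mul (z : ℂ) :
    ∫ t in (0 : ℝ)..(2 * π), max 0 (exp (t * I) * z).re = 2 * ‖z‖ := by
  have max_zero_mul (c : ℝ) : max 0 (‖z‖ * c) = ‖z‖ * max 0 c := by
    rw [mul_max_of_nonneg _ _ (norm_nonneg z), mul_zero]
  simp_rw [re_exp_mul_I_mul, max_zero_mul]
  rw [intervalIntegral.integral_const_mul, intervalIntegral.integral_comp_add_right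
    (fun t => max 0 (Real.cos t)), zero_add, add_comm, integral_max_zero_cos_eq_two, mul_comm]

theorem sum_max_zero_re_le_norm_sum_filter {ι : Type*} (Γ : Finset ι) (w : ι → ℂ) :
    ∑ k ∈ Γ, max 0 (w k).re ≤ ‖∑ k ∈ Γ with 0 < (w k).re, w k‖ := by
  classical
  calc ∑ k ∈ Γ, max 0 (w k).re = (∑ k ∈ Γ with 0 < (w k).re, w k).re := by
        rw [re_sum, sum_filter]
        refine sum_congr rfl fun k _ => ?_
        split_ifs with h
        · exact max_eq_right h.le
        · exact max_eq_left (not_lt.1 h)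
    _ ≤ _ := re_le_norm _

theorem sum_norm_le_pi_mul_of_forall_norm_sum_le {ι : Type*} {Γ : Finset ι} {z : ι → ℂ}
    {M : ℝ} (hM : ∀ Γ' ⊆ Γ, ‖∑ k ∈ Γ', z k‖ ≤ M) : ∑ k ∈ Γ, ‖z k‖ ≤ π * M := by
  classical
  have hbound (t : ℝ) : ∑ k ∈ Γ, max 0 (exp (t * I) * z k).re ≤ M := by
    refine (sum_max_zero_re_le_norm_sum_filter Γ _).trans ?_
    rw [← mul_sum, norm_mul, norm_exp_ofReal_mul_I, one_mul]
    exact hM _ (filter_subset _ _)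
  have hmono := intervalIntegral.integral_mono_on (μ := MeasureTheory.volume) (a := 0)
    (b := 2 * π) (by positivity) (by apply Continuous.intervalIntegrable; fun_prop)
    intervalIntegrable_const fun t _ => hbound t
  rw [intervalIntegral.integral_finsetSum
    fun k _ => by apply Continuous.intervalIntegrable; fun_prop] at hmono
  simp only [integral_max_zero_re_exp_mul_I_mul, ← mul_sum,
    intervalIntegral.integral_const, smul_eq_mul, sub_zero] at hmono
  linarith

end Complex

theorem norm_sum_smul_le_pi_mul_of_forall_norm_sum_le {E : Type*} [SeminormedAddCommGroup E]
    [NormedSpace ℂ E] {ι : Type*} {Γ : Finset ι} {f : ι → E} {α : ι → ℂ}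
    (hα : ∀ k ∈ Γ, ‖α k‖ ≤ 1) {M : ℝ} (hM : ∀ Γ' ⊆ Γ, ‖∑ k ∈ Γ', f k‖ ≤ M) :
    ‖∑ k ∈ Γ, α k • f k‖ ≤ π * M := by
  have hM0 : 0 ≤ M := by simpa using hM ∅ (empty_subset Γ)
  refine NormedSpace.norm_le_dual_bound ℂ _ (by positivity) fun g => ?_
  calc ‖g (∑ k ∈ Γ, α k • f k)‖ = ‖∑ k ∈ Γ, α k * g (f k)‖ := by simp
    _ ≤ ∑ k ∈ Γ, ‖g (f k)‖ := by
        refine (norm_sum_le _ _).trans (sum_le_sum fun k hk => ?_)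
        rw [norm_mul]
        exact mul_le_of_le_one_left (norm_nonneg _) (hα k hk)
    _ ≤ π * (‖g‖ * M) := Complex.sum_norm_le_pi_mul_of_forall_norm_sum_le fun Γ' hΓ' => by
        rw [← map_sum]
        exact g.le_opNorm_of_le (hM Γ' hΓ')
    _ = π * M * ‖g‖ := by ring

theorem norm_sum_smul_le_pi_mul_max_norm_sum_subset_general
    {X : Type*} [NormedAddCommGroup X] [NormedSpace ℂ X]
    {ι : Type*} (Γ : Finset ι) (f : ι → X) (α : ι → ℂ) (hα : ∀ k ∈ Γ, ‖α k‖ ≤ 1) :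
    ‖∑ k ∈ Γ, α k • f k‖ ≤
      Real.pi * Γ.powerset.sup' (Finset.powerset_nonempty Γ) (fun Γ' => ‖∑ k ∈ Γ', f k‖) :=
  norm_sum_smul_le_pi_mul_of_forall_norm_sum_le hα fun _ hΓ' =>
    le_sup' (fun Γ' => ‖∑ k ∈ Γ', f k‖) (mem_powerset.2 hΓ')

/-- For any finite system of vectors `(f_k)_{k∈Γ}` in a complex Banach space and any coefficients
`(α_k)_{k∈Γ}` with `|α_k| ≤ 1`, one has
`‖∑_{k∈Γ} α_k f_k‖ ≤ π · max_{Γ' ⊆ Γ} ‖∑_{k∈Γ'} f_k‖`. -/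
theorem norm_sum_smul_le_pi_mul_max_norm_sum_subset
    {X : Type*} [NormedAddCommGroup X] [NormedSpace ℂ X] [CompleteSpace X]
    {ι : Type*} (Γ : Finset ι) (f : ι → X) (α : ι → ℂ) (hα : ∀ k ∈ Γ, ‖α k‖ ≤ 1) :
    ‖∑ k ∈ Γ, α k • f k‖ ≤
      Real.pi * Γ.powerset.sup' (Finset.powerset_nonempty Γ) (fun Γ' => ‖∑ k ∈ Γ', f k‖) :=
  norm_sum_smul_le_pi_mul_max_norm_sum_subset_general Γ f α hα
end

section
/- For any finite system of vectors (f_k)_{k∈Γ} in a complex Banach space X and any continuous linear functional φ ∈ X*, one has ∑_{k∈Γ} |φ(f_k)| ≤ π · max_{Γ'⊆Γ} |φ(∑_{k∈Γ'} f_k)|, where the maximum is taken over all subsets Γ' of Γ. -/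
/-!
Averaging over rotations: the mean over `θ ∈ [0, 2π]` of the positive part of
`Re (e^{-iθ} z)` is `|z| / π`. For each fixed `θ`, the sum over `k` of the positive parts of
`Re (e^{-iθ} φ(f_k))` is the real part of `e^{-iθ} φ(∑_{k ∈ Γ'} f_k)`, where `Γ'` collects the
indices with positive real part, so it is at most the maximum on the right. Averaging over `θ`
gives the inequality.
-/

open Finset Real intervalIntegral

theorem integral_max_zero_cos_neg_pi_div_two_three_pi_div_two :
    ∫ θ in (-(π / 2))..(3 * π / 2), max 0 (cos θ) = 2 := by
  have hint (a b : ℝ) : IntervalIntegrable (fun θ => max 0 (cos θ)) MeasureTheory.volume a b :=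
    (continuous_const.max continuous_cos).intervalIntegrable a b
  have hpos : ∫ θ in (-(π / 2))..(π / 2), max 0 (cos θ) = 2 := by
    rw [integral_congr (g := cos) fun x hx => ?_, integral_cos]
    · norm_num
    · rw [Set.uIcc_of_le (by linarith [pi_pos])] at hx
      exact max_eq_right (cos_nonneg_of_mem_Icc hx)
  have hneg : ∫ θ in (π / 2)..(3 * π / 2), max 0 (cos θ) = 0 := by
    rw [integral_congr (g := fun _ => 0) fun x hx => ?_, integral_zero]
    rw [Set.uIcc_of_le (by linarith [pi_pos])] at hx
    exact max_eq_left (cos_nonpos_of_pi_div_two_le_of_le hx.1 (by linarith [hx.2]))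
  rw [← integral_add_adjacent_intervals (hint _ (π / 2)) (hint _ _), hpos, hneg, add_zero]

theorem integral_max_zero_cos_sub (c : ℝ) :
    ∫ θ in (0 : ℝ)..(2 * π), max 0 (cos (c - θ)) = 2 := by
  have hper : Function.Periodic (fun θ => max 0 (cos θ)) (2 * π) := fun θ => by
    simp only [cos_add_two_pi]
  have hshift := hper.intervalIntegral_add_eq (c - 2 * π) (-(π / 2))
  rw [sub_add_cancel] at hshift
  rw [integral_comp_sub_left (fun θ => max 0 (cos θ)), sub_zero, hshift,
    show -(π / 2) + 2 * π = 3 * π / 2 by ring,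
    integral_max_zero_cos_neg_pi_div_two_three_pi_div_two]

theorem re_exp_neg_mul_I_mul (θ : ℝ) (z : ℂ) :
    (Complex.exp (-(θ : ℂ) * Complex.I) * z).re = ‖z‖ * cos (z.arg - θ) := by
  nth_rewrite 1 [← Complex.norm_mul_exp_arg_mul_I z]
  rw [mul_left_comm, ← Complex.exp_add,
    show -(θ : ℂ) * Complex.I + z.arg * Complex.I = ((z.arg - θ : ℝ) : ℂ) * Complex.I by
      push_cast; ring,
    Complex.re_ofReal_mul, Complex.exp_ofReal_mul_I_re]

theorem integral_max_zero_re_exp_neg_mul_I_mul (z : ℂ) :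
    ∫ θ in (0 : ℝ)..(2 * π), max 0 (Complex.exp (-(θ : ℂ) * Complex.I) * z).re = 2 * ‖z‖ := by
  have hre (θ : ℝ) : max 0 (Complex.exp (-(θ : ℂ) * Complex.I) * z).re =
      ‖z‖ * max 0 (cos (z.arg - θ)) := by
    rw [re_exp_neg_mul_I_mul, mul_max_of_nonneg _ _ (norm_nonneg z), mul_zero]
  rw [integral_congr fun θ _ => hre θ, integral_const_mul, integral_max_zero_cos_sub, mul_comm]

theorem sum_max_zero_re_le_sup'_norm_sum {ι : Type*} (Γ : Finset ι) (w : ι → ℂ) :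
    ∑ k ∈ Γ, max 0 (w k).re ≤
      Γ.powerset.sup' (powerset_nonempty Γ) (fun Γ' => ‖∑ k ∈ Γ', w k‖) := by
  classical
  set Γ' := Γ.filter fun k => 0 < (w k).re
  calc ∑ k ∈ Γ, max 0 (w k).re = (∑ k ∈ Γ', w k).re := by
        rw [Complex.re_sum, sum_filter]
        refine sum_congr rfl fun k _ => ?_
        split_ifs with h
        · exact max_eq_right h.le
        · exact max_eq_left (not_lt.mp h)
    _ ≤ ‖∑ k ∈ Γ', w k‖ := Complex.re_le_norm _
    _ ≤ _ := le_sup' (fun Γ' => ‖∑ k ∈ Γ', w k‖) (mem_powerset.mpr (filter_subset _ _))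

theorem sum_norm_le_pi_mul_sup'_norm_sum {ι : Type*} (Γ : Finset ι) (z : ι → ℂ) :
    ∑ k ∈ Γ, ‖z k‖ ≤
      π * Γ.powerset.sup' (powerset_nonempty Γ) (fun Γ' => ‖∑ k ∈ Γ', z k‖) := by
  set M := Γ.powerset.sup' (powerset_nonempty Γ) (fun Γ' => ‖∑ k ∈ Γ', z k‖)
  set g : ι → ℝ → ℝ := fun k θ => max 0 (Complex.exp (-(θ : ℂ) * Complex.I) * z k).re
  have hg_cont (k : ι) : Continuous (g k) := by fun_prop
  have hg_le (θ : ℝ) : ∑ k ∈ Γ, g k θ ≤ M := by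
    refine (sum_max_zero_re_le_sup'_norm_sum Γ _).trans_eq (sup'_congr _ rfl fun Γ' _ => ?_)
    rw [← mul_sum, norm_mul, ← Complex.ofReal_neg, Complex.norm_exp_ofReal_mul_I, one_mul]
  have h_avg : ∫ θ in (0 : ℝ)..(2 * π), ∑ k ∈ Γ, g k θ = 2 * ∑ k ∈ Γ, ‖z k‖ := by
    rw [integral_finsetSum fun k _ => (hg_cont k).intervalIntegrable _ _, mul_sum]
    exact sum_congr rfl fun k _ => integral_max_zero_re_exp_neg_mul_I_mul (z k)
  have h_bound : ∫ θ in (0 : ℝ)..(2 * π), ∑ k ∈ Γ, g k θ ≤ 2 * π * M := by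
    simpa using integral_mono_on (by positivity : (0 : ℝ) ≤ 2 * π)
      ((continuous_finsetSum Γ fun k _ => hg_cont k).intervalIntegrable _ _)
      (intervalIntegrable_const (μ := MeasureTheory.volume)) fun θ _ => hg_le θ
  linarith

theorem sum_norm_apply_le_pi_mul_max_norm_apply_sum_subset_general
    {X : Type*} [NormedAddCommGroup X] [NormedSpace ℂ X]
    {ι : Type*} (Γ : Finset ι) (f : ι → X) (φ : X →L[ℂ] ℂ) :
    ∑ k ∈ Γ, ‖φ (f k)‖ ≤
      Real.pi * Γ.powerset.sup' (Finset.powerset_nonempty Γ)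
        (fun Γ' => ‖φ (∑ k ∈ Γ', f k)‖) := by
  simpa only [map_sum] using sum_norm_le_pi_mul_sup'_norm_sum Γ (fun k => φ (f k))

/-- For any finite system of vectors `(f_k)_{k∈Γ}` in a complex Banach space and any continuous
linear functional `φ ∈ X*`, one has
`∑_{k∈Γ} |φ(f_k)| ≤ π · max_{Γ'⊆Γ} |φ(∑_{k∈Γ'} f_k)|`. -/
theorem sum_norm_apply_le_pi_mul_max_norm_apply_sum_subset
    {X : Type*} [NormedAddCommGroup X] [NormedSpace ℂ X] [CompleteSpace X]
    {ι : Type*} (Γ : Finset ι) (f : ι → X) (φ : X →L[ℂ] ℂ) :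
    ∑ k ∈ Γ, ‖φ (f k)‖ ≤
      Real.pi * Γ.powerset.sup' (Finset.powerset_nonempty Γ)
        (fun Γ' => ‖φ (∑ k ∈ Γ', f k)‖) :=
  sum_norm_apply_le_pi_mul_max_norm_apply_sum_subset_general Γ f φ
end

section
/- For every positive integer n, with Γ = {0,1,…,2n−1} and f_k = e^{πik/n} ∈ ℂ, the maximum over all subsets Γ' ⊆ Γ of |∑_{k∈Γ'} f_k| equals 1/sin(π/(2n)), and with α_k = e^{−πik/n} one has |∑_{k=0}^{2n−1} α_k f_k| = 2n; consequently the ratio (1/sin(π/(2n)))/(2n) converges to 1/π as n → ∞, so the constant π in the selection inequality ‖∑ α_k f_k‖ ≤ π·max_{Γ'⊆Γ}‖∑_{k∈Γ'} f_k‖ is optimal already in X = ℂ. -/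
/-!
Write `ζ = e^{iπ/n}`, so `f_k = ζ^k` runs over the `2n`-th roots of unity. Rotating a subset sum
`S` onto the positive real axis by some `e^{iθ}` gives `|S| = ∑_{k∈Γ'} cos(θ + πk/n)`, which is at
most the sum of the positive parts `cos(θ + πk/n)⁺` over all of `Γ`. That sum is `π/n`-periodic in
`θ`, and when `θ ∈ [-π/2, -π/2 + π/n)` the terms with `k < n` are the nonnegative ones, so it is
bounded by `|∑_{k<n} ζ^k| = |ζ^n - 1| / |ζ - 1| = 1 / sin(π/(2n))`, a value attained by the
half-sum itself. Since `2n·sin(π/(2n)) → π`, the selection inequality applied to `α_k = ζ^{-k}`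
forces its constant to be at least `π`.
-/

open Finset Filter Complex Topology

lemma norm_sum_le_of_sum_posPart_re_le {ι : Type*} {s t : Finset ι} (hst : s ⊆ t) (v : ι → ℂ)
    {B : ℝ} (hB : ∀ θ : ℝ, ∑ k ∈ t, (exp (θ * I) * v k).re⁺ ≤ B) :
    ‖∑ k ∈ s, v k‖ ≤ B := by
  set S := ∑ k ∈ s, v k
  have hrot : exp ((-S.arg : ℝ) * I) * S = ‖S‖ := by
    calc exp ((-S.arg : ℝ) * I) * S = exp ((-S.arg : ℝ) * I) * (‖S‖ * exp (S.arg * I)) :=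
          congrArg _ (norm_mul_exp_arg_mul_I S).symm
      _ = ‖S‖ := by
          rw [mul_left_comm, ← exp_add, ofReal_neg, neg_mul, neg_add_cancel, exp_zero, mul_one]
  calc ‖S‖ = ∑ k ∈ s, (exp ((-S.arg : ℝ) * I) * v k).re := by
        rw [← re_sum, ← mul_sum, hrot, ofReal_re]
    _ ≤ ∑ k ∈ s, (exp ((-S.arg : ℝ) * I) * v k).re⁺ := sum_le_sum fun k _ => le_posPart _
    _ ≤ ∑ k ∈ t, (exp ((-S.arg : ℝ) * I) * v k).re⁺ :=
        sum_le_sum_of_subset_of_nonneg hst fun k _ _ => posPart_nonneg _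
    _ ≤ B := hB _

lemma re_exp_mul_I_mul_exp_mul_I (θ x : ℝ) : (exp (θ * I) * exp (x * I)).re = Real.cos (θ + x) := by
  rw [← exp_add, ← add_mul, ← ofReal_add, exp_ofReal_mul_I_re]

lemma Function.Periodic.sum_range_comp_add_mul {α M : Type*} [Semiring α] [AddCancelCommMonoid M]
    {g : α → M} {N : ℕ} {c : α} (hg : Function.Periodic g (N * c)) :
    Function.Periodic (fun x => ∑ k ∈ range N, g (x + k * c)) c := by
  intro x
  have hshift := sum_range_succ' (fun k : ℕ => g (x + k * c)) N
  rw [sum_range_succ, Nat.cast_zero, zero_mul, add_zero, hg x] at hshift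
  refine (sum_congr rfl fun k _ => ?_).trans (add_right_cancel hshift).symm
  rw [Nat.cast_succ, add_one_mul, add_assoc x c, add_comm c]

lemma sin_pi_div_two_mul_pos {n : ℕ} (hn : 0 < n) : 0 < Real.sin (Real.pi / (2 * n)) := by
  have hn' : (1 : ℝ) ≤ n := Nat.one_le_cast.mpr hn
  apply Real.sin_pos_of_pos_of_lt_pi (by positivity)
  rw [div_lt_iff₀ (by positivity)]
  nlinarith [Real.pi_pos]

lemma norm_sum_range_exp_pi_mul_div {n : ℕ} (hn : 0 < n) :
    ‖∑ k ∈ range n, exp ((Real.pi * k / n : ℝ) * I)‖ = 1 / Real.sin (Real.pi / (2 * n)) := by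
  have hn' : (n : ℂ) ≠ 0 := Nat.cast_ne_zero.mpr hn.ne'
  set ζ := exp ((Real.pi / n : ℝ) * I)
  have hpow : ∀ k : ℕ, exp ((Real.pi * k / n : ℝ) * I) = ζ ^ k := fun k => by
    rw [← exp_nat_mul]; push_cast; ring_nf
  have hζn : ζ ^ n = -1 := by
    rw [← exp_nat_mul, ← exp_pi_mul_I]; push_cast; field_simp
  have hs := sin_pi_div_two_mul_pos hn
  have hζ1 : ‖ζ - 1‖ = 2 * Real.sin (Real.pi / (2 * n)) := by
    have h := norm_exp_I_mul_ofReal_sub_one (Real.pi / n)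
    rwa [mul_comm I, div_div, mul_comm (n : ℝ), Real.norm_of_nonneg (by positivity)] at h
  have hζne : ζ ≠ 1 := fun h => by simp [h] at hζ1; linarith
  rw [sum_congr rfl fun k _ => hpow k, geom_sum_eq hζne, norm_div, hζn, hζ1]
  norm_num
  field_simp

lemma sum_range_two_mul_posPart_cos_eq_of_mem_Ico {n : ℕ} (hn : 0 < n) {θ : ℝ}
    (hθ : θ ∈ Set.Ico (-(Real.pi / 2)) (-(Real.pi / 2) + Real.pi / n)) :
    ∑ k ∈ range (2 * n), (Real.cos (θ + k * (Real.pi / n)))⁺ =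
      ∑ k ∈ range n, Real.cos (θ + k * (Real.pi / n)) := by
  have hstep : ∀ k ∈ range n, 0 ≤ (k : ℝ) * (Real.pi / n) ∧
      (k : ℝ) * (Real.pi / n) + Real.pi / n ≤ Real.pi := fun k hk => by
    have hk : (k + 1 : ℝ) ≤ n := by exact_mod_cast mem_range.mp hk
    refine ⟨by positivity, ?_⟩
    calc (k : ℝ) * (Real.pi / n) + Real.pi / n = (k + 1) * (Real.pi / n) := by ring
      _ ≤ n * (Real.pi / n) := by gcongr
      _ = Real.pi := by field_simp
  obtain ⟨hθ₀, hθ₁⟩ := hθ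
  rw [two_mul, sum_range_add]
  have hlow : ∀ k ∈ range n,
      (Real.cos (θ + k * (Real.pi / n)))⁺ = Real.cos (θ + k * (Real.pi / n)) :=
    fun k hk => posPart_eq_self.mpr <| Real.cos_nonneg_of_neg_pi_div_two_le_of_le
      (by linarith [hstep k hk]) (by linarith [hstep k hk])
  have hhigh : ∀ k ∈ range n, (Real.cos (θ + ↑(n + k) * (Real.pi / n)))⁺ = 0 := fun k hk => by
    have hπ : (n : ℝ) * (Real.pi / n) = Real.pi := by field_simp
    refine posPart_eq_zero.mpr <| Real.cos_nonpos_of_pi_div_two_le_of_le ?_ ?_ <;>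
      · push_cast; linarith [hstep k hk]
  rw [sum_congr rfl hlow, sum_congr rfl hhigh, sum_const_zero, add_zero]

lemma sum_range_two_mul_posPart_cos_le {n : ℕ} (hn : 0 < n) (θ : ℝ) :
    ∑ k ∈ range (2 * n), (Real.cos (θ + k * (Real.pi / n)))⁺ ≤
      1 / Real.sin (Real.pi / (2 * n)) := by
  have hc : 0 < Real.pi / n := by have := Real.pi_pos; positivity
  have hper : Function.Periodic (fun x => ∑ k ∈ range (2 * n), (Real.cos (x + k * (Real.pi / n)))⁺)
      (Real.pi / n) := by
    refine Function.Periodic.sum_range_comp_add_mul (g := fun x => (Real.cos x)⁺) fun x => ?_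
    have h2π : ((2 * n : ℕ) : ℝ) * (Real.pi / n) = 2 * Real.pi := by push_cast; field_simp
    simp only [h2π, Real.cos_add_two_pi]
  obtain ⟨θ', hθ', m, rfl⟩ : ∃ θ' ∈ Set.Ico (-(Real.pi / 2)) (-(Real.pi / 2) + Real.pi / n),
      ∃ m : ℤ, θ = θ' + m • (Real.pi / n) :=
    ⟨_, toIcoMod_mem_Ico hc _ θ, _, (toIcoMod_add_toIcoDiv_zsmul hc _ θ).symm⟩
  calc ∑ k ∈ range (2 * n), (Real.cos (θ' + m • (Real.pi / n) + k * (Real.pi / n)))⁺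
      = ∑ k ∈ range n, Real.cos (θ' + k * (Real.pi / n)) := by
        rw [← sum_range_two_mul_posPart_cos_eq_of_mem_Ico hn hθ']
        exact hper.zsmul m θ'
    _ = (exp (θ' * I) * ∑ k ∈ range n, exp ((Real.pi * k / n : ℝ) * I)).re := by
        rw [mul_sum, re_sum]
        refine sum_congr rfl fun k _ => ?_
        rw [re_exp_mul_I_mul_exp_mul_I]
        ring_nf
    _ ≤ ‖exp (θ' * I) * ∑ k ∈ range n, exp ((Real.pi * k / n : ℝ) * I)‖ := re_le_norm _
    _ = 1 / Real.sin (Real.pi / (2 * n)) := by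
        rw [norm_mul, norm_exp_ofReal_mul_I, one_mul, norm_sum_range_exp_pi_mul_div hn]

lemma norm_sum_exp_pi_mul_div_le {n : ℕ} (hn : 0 < n) {s : Finset ℕ} (hs : s ⊆ range (2 * n)) :
    ‖∑ k ∈ s, exp ((Real.pi * k / n : ℝ) * I)‖ ≤ 1 / Real.sin (Real.pi / (2 * n)) :=
  norm_sum_le_of_sum_posPart_re_le hs _ fun θ => by
    simpa only [re_exp_mul_I_mul_exp_mul_I, mul_div_assoc, mul_comm Real.pi]
      using sum_range_two_mul_posPart_cos_le hn θ

lemma tendsto_two_mul_mul_sin_pi_div :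
    Tendsto (fun n : ℕ => 2 * n * Real.sin (Real.pi / (2 * n))) atTop (𝓝 Real.pi) := by
  have hx : Tendsto (fun n : ℕ => Real.pi / (2 * n)) atTop (𝓝 0) :=
    tendsto_const_nhds.div_atTop (tendsto_natCast_atTop_atTop.const_mul_atTop two_pos)
  have hsinc := ((Real.continuous_sinc.tendsto 0).comp hx).const_mul Real.pi
  rw [Real.sinc_zero, mul_one] at hsinc
  refine hsinc.congr' ?_
  filter_upwards [eventually_gt_atTop 0] with n hn
  have hn' : (n : ℝ) ≠ 0 := Nat.cast_ne_zero.mpr hn.ne'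
  rw [Function.comp_apply, Real.sinc_of_ne_zero (by positivity)]
  field_simp

/-- Optimality of the constant `π` in the selection inequality, already in `X = ℂ`:
for `Γ = {0,…,2n−1}`, `f_k = e^{πik/n}` and `α_k = e^{−πik/n}`, the maximum of `|∑_{k∈Γ'} f_k|`
over subsets `Γ' ⊆ Γ` equals `1/sin(π/(2n))`, while `|∑_k α_k f_k| = 2n`; the ratio
`(1/sin(π/(2n)))/(2n)` converges to `1/π`, hence no constant smaller than `π` works. -/
theorem pi_optimal_in_selection_inequality :
    (∀ n : ℕ, 0 < n →
      ((Finset.range (2 * n)).powerset.sup' (Finset.powerset_nonempty _)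
          (fun Γ' => ‖∑ k ∈ Γ', Complex.exp (((Real.pi * k / n : ℝ) : ℂ) * Complex.I)‖))
          = 1 / Real.sin (Real.pi / (2 * n)) ∧
      ‖∑ k ∈ Finset.range (2 * n),
          Complex.exp (((-(Real.pi * k / n) : ℝ) : ℂ) * Complex.I) *
            Complex.exp (((Real.pi * k / n : ℝ) : ℂ) * Complex.I)‖ = 2 * n) ∧
    Tendsto (fun n : ℕ => (1 / Real.sin (Real.pi / (2 * n))) / (2 * n)) atTop
      (nhds (1 / Real.pi)) ∧
    ∀ C : ℝ,
      (∀ (Γ : Finset ℕ) (g α : ℕ → ℂ), (∀ k ∈ Γ, ‖α k‖ ≤ 1) →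
        ‖∑ k ∈ Γ, α k * g k‖ ≤
          C * Γ.powerset.sup' (Finset.powerset_nonempty Γ) (fun Γ' => ‖∑ k ∈ Γ', g k‖)) →
      Real.pi ≤ C := by
  have hmax : ∀ n : ℕ, 0 < n → (range (2 * n)).powerset.sup' (powerset_nonempty _)
      (fun s => ‖∑ k ∈ s, exp ((Real.pi * k / n : ℝ) * I)‖) = 1 / Real.sin (Real.pi / (2 * n)) :=
    fun n hn => le_antisymm
      (sup'_le _ _ fun s hs => norm_sum_exp_pi_mul_div_le hn (mem_powerset.mp hs))
      (le_sup'_of_le _ (mem_powerset.mpr (range_subset_range.mpr (by omega)))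
        (norm_sum_range_exp_pi_mul_div hn).ge)
  have hdiag : ∀ n : ℕ, ‖∑ k ∈ range (2 * n), exp ((-(Real.pi * k / n) : ℝ) * I) *
      exp ((Real.pi * k / n : ℝ) * I)‖ = 2 * n := fun n => by
    simp [← exp_add]
  refine ⟨fun n hn => ⟨hmax n hn, hdiag n⟩, ?_, fun C hC => ?_⟩
  · rw [one_div]
    exact (tendsto_two_mul_mul_sin_pi_div.inv₀ Real.pi_ne_zero).congr fun n => by ring
  refine le_of_tendsto tendsto_two_mul_mul_sin_pi_div ?_
  filter_upwards [eventually_gt_atTop 0] with n hn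
  have hsel := hC (range (2 * n)) (fun k => exp ((Real.pi * k / n : ℝ) * I))
    (fun k => exp ((-(Real.pi * k / n) : ℝ) * I)) fun k _ => (norm_exp_ofReal_mul_I _).le
  rwa [hmax n hn, hdiag n, mul_one_div, le_div_iff₀ (sin_pi_div_two_mul_pos hn)] at hsel
end

section
/- Let L be a countably infinite discrete abelian group with compact dual L̂ whose Haar measure is normalized to total mass 1, and let V ⊆ L̂ be an open set with −V = V and positive Haar measure |V|. Then for every nonempty finite set Γ ⊂ L one has ∫_{L̂} g_Γ(τ)·(𝟙_V ∗ 𝟙_V)(τ) dτ ≥ |V|², where 𝟙_V ∗ 𝟙_V denotes the convolution of the indicator function of V with itself. -/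
/-!
Writing `g_Γ(τ) = (1/#Γ) ∑_{k,l ∈ Γ} e(k - l, τ)` and using that integrating a character against
a convolution gives the product of the two Fourier coefficients, the integral equals
`(1/#Γ) ∑_{k,l ∈ Γ} 𝟙̂_V(k - l)²`. Since `V = V⁻¹`, the coefficients `𝟙̂_V` are real, so every
term is a square, and the `#Γ` diagonal terms alone contribute `𝟙̂_V(0)² = |V|²` each.
-/

open MeasureTheory
open scoped ENNReal

noncomputable section

variable {L : Type*} [AddCommGroup L] [TopologicalSpace L]

/-- The bi-character `e(k,τ) = τ(k)` of a discrete abelian group `L`, valued in `ℂ`. -/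
def bichar (k : L) (τ : PontryaginDual (Multiplicative L)) : ℂ :=
  (τ (Multiplicative.ofAdd k) : ℂ)

/-- `g_Γ(τ) = (1/card Γ)·|∑_{k∈Γ} e(k,τ)|²`. -/
def gfun (Γ : Finset L) (τ : PontryaginDual (Multiplicative L)) : ℝ :=
  (Γ.card : ℝ)⁻¹ * ‖∑ k ∈ Γ, bichar k τ‖ ^ 2

/-- Convolution `(f∗h)(τ) = ∫ f(τ−σ)h(σ) dσ` on the (multiplicatively written) compact dual. -/
def dualConvR [MeasurableSpace (PontryaginDual (Multiplicative L))]
    (μ : Measure (PontryaginDual (Multiplicative L)))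
    (f h : PontryaginDual (Multiplicative L) → ℝ)
    (τ : PontryaginDual (Multiplicative L)) : ℝ :=
  ∫ σ, f (τ * σ⁻¹) * h σ ∂μ

instance {α : Type*} [Countable α] : Countable (Multiplicative α) := ‹Countable α›

instance {A : Type*} [Monoid A] [TopologicalSpace A] :
    ContinuousEvalConst (PontryaginDual A) A Circle :=
  inferInstanceAs (ContinuousEvalConst (A →ₜ* Circle) A Circle)

instance {A : Type*} [Monoid A] [TopologicalSpace A] [SecondCountableTopology A]
    [LocallyCompactSpace A] : SecondCountableTopology (PontryaginDual A) :=
  (ContinuousMonoidHom.isInducing_toContinuousMap A Circle).secondCountableTopology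

section Character

variable {G : Type*} [MeasurableSpace G] {μ : Measure G}

theorem MeasureTheory.Integrable.circle_mul {ψ : G → Circle}
    (hψ : Measurable fun x ↦ (ψ x : ℂ)) {f : G → ℝ} (hf : Integrable f μ) :
    Integrable (fun x ↦ (ψ x : ℂ) * f x) μ :=
  hf.ofReal.bdd_mul (c := 1) hψ.aestronglyMeasurable (.of_forall fun x ↦ by simp [Circle.norm_coe])

variable [CommGroup G]

theorem conj_integral_character_mul [MeasurableInv G] [μ.IsInvInvariant] (ψ : G →* Circle)
    {f : G → ℝ} (hf : ∀ x, f x⁻¹ = f x) :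
    starRingEnd ℂ (∫ x, (ψ x : ℂ) * f x ∂μ) = ∫ x, (ψ x : ℂ) * f x ∂μ := by
  rw [← integral_conj, ← integral_inv_eq_self _ μ]
  simp only [map_inv, Circle.coe_inv_eq_conj, map_mul, Complex.conj_conj, Complex.conj_ofReal, hf]

theorem integrable_mul_prod_div [MeasurableMul₂ G] [MeasurableInv G] [SFinite μ]
    [μ.IsMulRightInvariant] {f h : G → ℝ} (hf : Integrable f μ) (hh : Integrable h μ) :
    Integrable (fun z : G × G ↦ f (z.1 * z.2⁻¹) * h z.2) (μ.prod μ) := by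
  simpa [Function.comp_def, div_eq_mul_inv] using
    (measurePreserving_div_prod μ μ).integrable_comp_of_integrable (hf.mul_prod hh)

theorem integrable_convolution [MeasurableMul₂ G] [MeasurableInv G] [SFinite μ]
    [μ.IsMulRightInvariant] {f h : G → ℝ} (hf : Integrable f μ) (hh : Integrable h μ) :
    Integrable (fun τ ↦ ∫ σ, f (τ * σ⁻¹) * h σ ∂μ) μ :=
  (integrable_mul_prod_div hf hh).integral_prod_left

theorem integral_character_mul_convolution [MeasurableMul₂ G] [MeasurableInv G] [SFinite μ]
    [μ.IsMulRightInvariant] {ψ : G →* Circle} (hψ : Measurable fun x ↦ (ψ x : ℂ)) {f h : G → ℝ}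
    (hf : Integrable f μ) (hh : Integrable h μ) :
    ∫ τ, (ψ τ : ℂ) * ↑(∫ σ, f (τ * σ⁻¹) * h σ ∂μ) ∂μ
      = (∫ ρ, (ψ ρ : ℂ) * f ρ ∂μ) * ∫ σ, (ψ σ : ℂ) * h σ ∂μ := by
  set F : G × G → ℂ := fun z ↦ ((ψ z.1 : ℂ) * f z.1) * ((ψ z.2 : ℂ) * h z.2)
  have hF : Integrable F (μ.prod μ) := (hf.circle_mul hψ).mul_prod (hh.circle_mul hψ)
  -- the substitution `ρ = τ / σ` separates the variables, as `ψ τ = ψ ρ * ψ σ`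
  have hΦ := measurePreserving_div_prod μ μ
  have hFΦ : ∀ τ σ, F (τ / σ, σ) = ψ τ * ↑(f (τ * σ⁻¹) * h σ) := by
    intro τ σ
    have hψτ : (ψ τ : ℂ) = ψ (τ / σ) * ψ σ := by rw [← Circle.coe_mul, ← map_mul, div_mul_cancel]
    simp only [F, hψτ, div_eq_mul_inv, Complex.ofReal_mul]
    ring
  calc ∫ τ, (ψ τ : ℂ) * ↑(∫ σ, f (τ * σ⁻¹) * h σ ∂μ) ∂μ
      = ∫ τ, ∫ σ, F (τ / σ, σ) ∂μ ∂μ := by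
        simp only [hFΦ, integral_const_mul, integral_complex_ofReal]
    _ = ∫ z, F (z.1 / z.2, z.2) ∂μ.prod μ :=
        (integral_prod _ (hΦ.integrable_comp_of_integrable hF)).symm
    _ = ∫ z, F z ∂μ.prod μ := by
        rw [← integral_map hΦ.measurable.aemeasurable (by rw [hΦ.map_eq]; exact hF.1), hΦ.map_eq]
    _ = _ := integral_prod_mul (fun ρ ↦ (ψ ρ : ℂ) * f ρ) (fun σ ↦ (ψ σ : ℂ) * h σ)

end Character

theorem Finset.sq_le_inv_card_mul_sum_sum_sq {L : Type*} [AddGroup L] {Γ : Finset L}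
    (hΓ : Γ.Nonempty) (a : L → ℝ) :
    a 0 ^ 2 ≤ (Γ.card : ℝ)⁻¹ * ∑ k ∈ Γ, ∑ l ∈ Γ, a (k - l) ^ 2 := by
  have hcard : (0 : ℝ) < Γ.card := by exact_mod_cast hΓ.card_pos
  rw [le_inv_mul_iff₀ hcard, ← nsmul_eq_mul, ← Finset.sum_const]
  refine Finset.sum_le_sum fun k hk ↦ ?_
  simpa using Finset.single_le_sum (f := fun l ↦ a (k - l) ^ 2) (fun _ _ ↦ sq_nonneg _) hk

theorem continuous_bichar (k : L) : Continuous (bichar (L := L) k) :=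
  continuous_subtype_val.comp (continuous_eval_const (Multiplicative.ofAdd k))

def bicharHom (k : L) : PontryaginDual (Multiplicative L) →* Circle where
  toFun τ := τ (Multiplicative.ofAdd k)
  map_one' := rfl
  map_mul' _ _ := rfl

theorem coe_bicharHom (k : L) (τ : PontryaginDual (Multiplicative L)) :
    (bicharHom k τ : ℂ) = bichar k τ :=
  rfl

theorem bichar_zero (τ : PontryaginDual (Multiplicative L)) : bichar (0 : L) τ = 1 := by
  rw [bichar, ofAdd_zero, map_one, Circle.coe_one]

theorem bichar_sub (k l : L) (τ : PontryaginDual (Multiplicative L)) :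
    bichar (k - l) τ = bichar k τ * starRingEnd ℂ (bichar l τ) := by
  rw [bichar, ofAdd_sub, map_div, div_eq_mul_inv, Circle.coe_mul, Circle.coe_inv_eq_conj]
  rfl

theorem ofReal_gfun (Γ : Finset L) (τ : PontryaginDual (Multiplicative L)) :
    (gfun Γ τ : ℂ) = (Γ.card : ℂ)⁻¹ * ∑ k ∈ Γ, ∑ l ∈ Γ, bichar (k - l) τ := by
  simp only [gfun, bichar_sub, Complex.ofReal_mul, Complex.ofReal_inv, Complex.ofReal_natCast,
    Complex.ofReal_pow, ← Complex.mul_conj', map_sum, Finset.sum_mul_sum]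

section DualFourier

variable [MeasurableSpace (PontryaginDual (Multiplicative L))]

def dualFourier (μ : Measure (PontryaginDual (Multiplicative L)))
    (f : PontryaginDual (Multiplicative L) → ℝ) (m : L) : ℂ :=
  ∫ ρ, bichar m ρ * f ρ ∂μ

theorem dualFourier_zero (μ : Measure (PontryaginDual (Multiplicative L)))
    (f : PontryaginDual (Multiplicative L) → ℝ) : dualFourier μ f 0 = ∫ ρ, f ρ ∂μ := by
  simp only [dualFourier, bichar_zero, one_mul, integral_complex_ofReal]

variable [BorelSpace (PontryaginDual (Multiplicative L))]
  {μ : Measure (PontryaginDual (Multiplicative L))}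

theorem conj_dualFourier [μ.IsInvInvariant] {f : PontryaginDual (Multiplicative L) → ℝ}
    (hf : ∀ τ, f τ⁻¹ = f τ) (m : L) :
    starRingEnd ℂ (dualFourier μ f m) = dualFourier μ f m :=
  conj_integral_character_mul (bicharHom m) hf

theorem ofReal_integral_gfun_mul_dualConvR [DiscreteTopology L] [Countable L] [SFinite μ]
    [μ.IsMulRightInvariant] (Γ : Finset L) {f : PontryaginDual (Multiplicative L) → ℝ}
    (hf : Integrable f μ) :
    ((∫ τ, gfun Γ τ * dualConvR μ f f τ ∂μ : ℝ) : ℂ)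
      = (Γ.card : ℂ)⁻¹ * ∑ k ∈ Γ, ∑ l ∈ Γ, dualFourier μ f (k - l) ^ 2 := by
  have hψ (m : L) : Measurable fun τ ↦ (bicharHom m τ : ℂ) := (continuous_bichar m).measurable
  have hconv (m : L) : Integrable (fun τ ↦ (bicharHom m τ : ℂ) * dualConvR μ f f τ) μ :=
    (integrable_convolution hf hf).circle_mul (hψ m)
  calc ((∫ τ, gfun Γ τ * dualConvR μ f f τ ∂μ : ℝ) : ℂ)
      = (Γ.card : ℂ)⁻¹ * ∑ k ∈ Γ, ∑ l ∈ Γ,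
          ∫ τ, (bicharHom (k - l) τ : ℂ) * ↑(dualConvR μ f f τ) ∂μ := by
        simp only [← integral_complex_ofReal, Complex.ofReal_mul, ofReal_gfun, ← coe_bicharHom,
          mul_assoc, Finset.sum_mul]
        rw [integral_const_mul,
          integral_finsetSum _ fun k _ ↦ integrable_finsetSum _ fun l _ ↦ hconv _]
        exact congrArg _ (Finset.sum_congr rfl fun k _ ↦ integral_finsetSum _ fun l _ ↦ hconv _)
    _ = _ := by
        simp only [dualConvR, integral_character_mul_convolution (hψ _) hf hf, ← sq]
        rfl

end DualFourier

theorem integral_gfun_mul_indicator_conv_indicator_ge_general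
    [DiscreteTopology L] [Countable L]
    [MeasurableSpace (PontryaginDual (Multiplicative L))]
    [BorelSpace (PontryaginDual (Multiplicative L))]
    (μ : Measure (PontryaginDual (Multiplicative L))) [μ.IsHaarMeasure] [IsProbabilityMeasure μ]
    (V : Set (PontryaginDual (Multiplicative L))) (hVopen : IsOpen V) (hVsymm : V⁻¹ = V)
    (Γ : Finset L) (hΓ : Γ.Nonempty) :
    (μ V).toReal ^ 2 ≤
      ∫ τ, gfun Γ τ * dualConvR μ (V.indicator 1) (V.indicator 1) τ ∂μ := by
  set χ : PontryaginDual (Multiplicative L) → ℝ := V.indicator 1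
  have hχ : Integrable χ μ := (integrable_const 1).indicator hVopen.measurableSet
  have hχ_inv (τ : PontryaginDual (Multiplicative L)) : χ τ⁻¹ = χ τ := by
    have hmem : τ⁻¹ ∈ V ↔ τ ∈ V := by rw [← Set.mem_inv, hVsymm]
    classical
    simp only [χ, Set.indicator_apply, hmem, Pi.one_apply]
  have hreal (m : L) : ((dualFourier μ χ m).re : ℂ) = dualFourier μ χ m :=
    Complex.conj_eq_iff_re.mp (conj_dualFourier hχ_inv m)
  have hzero : (dualFourier μ χ 0).re = (μ V).toReal := by
    simp [dualFourier_zero, χ, integral_indicator_one hVopen.measurableSet, measureReal_def]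
  have key : ∫ τ, gfun Γ τ * dualConvR μ χ χ τ ∂μ
      = (Γ.card : ℝ)⁻¹ * ∑ k ∈ Γ, ∑ l ∈ Γ, (dualFourier μ χ (k - l)).re ^ 2 := by
    apply Complex.ofReal_injective
    rw [ofReal_integral_gfun_mul_dualConvR Γ hχ]
    push_cast
    simp only [hreal]
  rw [key, ← hzero]
  exact Finset.sq_le_inv_card_mul_sum_sum_sq hΓ fun m ↦ (dualFourier μ χ m).re

/-- If `V` is a symmetric open subset of the dual of positive Haar measure, then for every
nonempty finite `Γ ⊆ L` one has `∫ g_Γ · (𝟙_V ∗ 𝟙_V) ≥ |V|²`. -/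
theorem integral_gfun_mul_indicator_conv_indicator_ge
    [DiscreteTopology L] [Countable L] [Infinite L]
    [MeasurableSpace (PontryaginDual (Multiplicative L))]
    [BorelSpace (PontryaginDual (Multiplicative L))]
    (μ : Measure (PontryaginDual (Multiplicative L))) [μ.IsHaarMeasure] [IsProbabilityMeasure μ]
    (V : Set (PontryaginDual (Multiplicative L))) (hVopen : IsOpen V) (hVsymm : V⁻¹ = V)
    (hVpos : 0 < μ V) (Γ : Finset L) (hΓ : Γ.Nonempty) :
    (μ V).toReal ^ 2 ≤
      ∫ τ, gfun Γ τ * dualConvR μ (V.indicator 1) (V.indicator 1) τ ∂μ :=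
  integral_gfun_mul_indicator_conv_indicator_ge_general μ V hVopen hVsymm Γ hΓ
end
end
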